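/- arXiv:2405.19268 — 4 statements merged into one kernel-verified Lean document; each statement's English description precedes it below -/
import Mathlib

section
/- Let n ≥ 1 and let D be a digraph on Fin n that contains no loop (i.e., D i i fails for every i). Then D has sign symmetric P_{0,1}^+-completion. -/
/-!
Fill each unspecified entry whose twin is specified with the twin's value, and every other
unspecified entry with `0`; the resulting matrix `E` is sign symmetric and has
zero diagonal, since `D` has no loops. Its principal minors shifted by `c • 1` are the values
at `c` of monic characteristic polynomials of positive degree, so for `c` large `c • 1 + E`
is a P-matrix, hence a P₀₁⁺-matrix, and it still completes `A` off the diagonal.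
-/

namespace SSP

/-- The principal minor of `B` on the index set `S`: the determinant of the
S×S principal submatrix of `B`. -/
def pMinor {n : ℕ} (B : Matrix (Fin n) (Fin n) ℝ) (S : Finset (Fin n)) : ℝ :=
  (B.submatrix (fun i : {x // x ∈ S} => (i : Fin n))
               (fun j : {x // x ∈ S} => (j : Fin n))).det

/-- `B` is sign symmetric: for all `i ≠ j`, twin entries have a positive product
or are both zero. -/
def SignSym {n : ℕ} (B : Matrix (Fin n) (Fin n) ℝ) : Prop :=
  ∀ i j : Fin n, i ≠ j → (0 < B i j * B j i ∨ (B i j = 0 ∧ B j i = 0))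

/-- `B` is a P₀-matrix: every principal minor is nonnegative. -/
def IsP0 {n : ℕ} (B : Matrix (Fin n) (Fin n) ℝ) : Prop :=
  ∀ S : Finset (Fin n), S.Nonempty → 0 ≤ pMinor B S

/-- `B` is a P-matrix: every principal minor is positive. -/
def IsP {n : ℕ} (B : Matrix (Fin n) (Fin n) ℝ) : Prop :=
  ∀ S : Finset (Fin n), S.Nonempty → 0 < pMinor B S

/-- `B` is a P₀⁺-matrix: for every `k ∈ {1,…,n}`, every size-`k` principal
minor is nonnegative and at least one size-`k` principal minor is positive. -/
def IsP0plus {n : ℕ} (B : Matrix (Fin n) (Fin n) ℝ) : Prop :=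
  ∀ k : ℕ, 1 ≤ k → k ≤ n →
    ((∀ S : Finset (Fin n), S.card = k → 0 ≤ pMinor B S) ∧
     (∃ S : Finset (Fin n), S.card = k ∧ 0 < pMinor B S))

/-- `B` is a P₀₁⁺-matrix: a P₀⁺-matrix with positive diagonal entries. -/
def IsP01plus {n : ℕ} (B : Matrix (Fin n) (Fin n) ℝ) : Prop :=
  IsP0plus B ∧ ∀ i : Fin n, 0 < B i i

/-- `B` is a P₀₁-matrix: a P₀-matrix with positive diagonal entries. -/
def IsP01 {n : ℕ} (B : Matrix (Fin n) (Fin n) ℝ) : Prop :=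
  IsP0 B ∧ ∀ i : Fin n, 0 < B i i

/-- Every specified diagonal entry of the partial matrix `A` (specifying the
digraph `D`) is positive. -/
def PartialDiagPos {n : ℕ} (D : Fin n → Fin n → Prop)
    (A : Matrix (Fin n) (Fin n) ℝ) : Prop :=
  ∀ i : Fin n, D i i → 0 < A i i

/-- Fully specified twin entries of the partial matrix `A` have positive
product or are both zero. -/
def PartialTwin {n : ℕ} (D : Fin n → Fin n → Prop)
    (A : Matrix (Fin n) (Fin n) ℝ) : Prop :=
  ∀ i j : Fin n, i ≠ j → D i j → D j i →
    (0 < A i j * A j i ∨ (A i j = 0 ∧ A j i = 0))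

/-- Every fully specified principal minor of the partial matrix `A` is
nonnegative. -/
def PartialMinorsNonneg {n : ℕ} (D : Fin n → Fin n → Prop)
    (A : Matrix (Fin n) (Fin n) ℝ) : Prop :=
  ∀ S : Finset (Fin n), S.Nonempty → (∀ i ∈ S, ∀ j ∈ S, D i j) → 0 ≤ pMinor A S

/-- Every fully specified principal minor of the partial matrix `A` is
positive. -/
def PartialMinorsPos {n : ℕ} (D : Fin n → Fin n → Prop)
    (A : Matrix (Fin n) (Fin n) ℝ) : Prop :=
  ∀ S : Finset (Fin n), S.Nonempty → (∀ i ∈ S, ∀ j ∈ S, D i j) → 0 < pMinor A S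

/-- `B` is a completion of the partial matrix `A` specifying `D`. -/
def Completes {n : ℕ} (D : Fin n → Fin n → Prop)
    (A B : Matrix (Fin n) (Fin n) ℝ) : Prop :=
  ∀ i j : Fin n, D i j → B i j = A i j

/-- `A` is a partial sign symmetric P₀₁⁺-matrix specifying `D`. -/
def PartSSP01plus {n : ℕ} (D : Fin n → Fin n → Prop)
    (A : Matrix (Fin n) (Fin n) ℝ) : Prop :=
  PartialDiagPos D A ∧ PartialTwin D A ∧ PartialMinorsNonneg D A

/-- `A` is a partial sign symmetric P₀₁-matrix specifying `D`. -/
def PartSSP01 {n : ℕ} (D : Fin n → Fin n → Prop)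
    (A : Matrix (Fin n) (Fin n) ℝ) : Prop :=
  PartialDiagPos D A ∧ PartialTwin D A ∧ PartialMinorsNonneg D A

/-- `A` is a partial sign symmetric P₀-matrix specifying `D`. -/
def PartSSP0 {n : ℕ} (D : Fin n → Fin n → Prop)
    (A : Matrix (Fin n) (Fin n) ℝ) : Prop :=
  PartialTwin D A ∧ PartialMinorsNonneg D A

/-- `A` is a partial sign symmetric P₀⁺-matrix specifying `D`. -/
def PartSSP0plus {n : ℕ} (D : Fin n → Fin n → Prop)
    (A : Matrix (Fin n) (Fin n) ℝ) : Prop :=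
  PartialTwin D A ∧ PartialMinorsNonneg D A

/-- `A` is a partial sign symmetric P-matrix specifying `D`. -/
def PartSSP {n : ℕ} (D : Fin n → Fin n → Prop)
    (A : Matrix (Fin n) (Fin n) ℝ) : Prop :=
  PartialTwin D A ∧ PartialMinorsPos D A

/-- `D` has sign symmetric P₀₁⁺-completion. -/
def HasSSP01plusCompletion {n : ℕ} (D : Fin n → Fin n → Prop) : Prop :=
  ∀ A : Matrix (Fin n) (Fin n) ℝ, PartSSP01plus D A →
    ∃ B : Matrix (Fin n) (Fin n) ℝ, Completes D A B ∧ SignSym B ∧ IsP01plus B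

/-- `D` has sign symmetric P₀₁-completion. -/
def HasSSP01Completion {n : ℕ} (D : Fin n → Fin n → Prop) : Prop :=
  ∀ A : Matrix (Fin n) (Fin n) ℝ, PartSSP01 D A →
    ∃ B : Matrix (Fin n) (Fin n) ℝ, Completes D A B ∧ SignSym B ∧ IsP01 B

/-- `D` has sign symmetric P₀-completion. -/
def HasSSP0Completion {n : ℕ} (D : Fin n → Fin n → Prop) : Prop :=
  ∀ A : Matrix (Fin n) (Fin n) ℝ, PartSSP0 D A →
    ∃ B : Matrix (Fin n) (Fin n) ℝ, Completes D A B ∧ SignSym B ∧ IsP0 B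

/-- `D` has sign symmetric P₀⁺-completion. -/
def HasSSP0plusCompletion {n : ℕ} (D : Fin n → Fin n → Prop) : Prop :=
  ∀ A : Matrix (Fin n) (Fin n) ℝ, PartSSP0plus D A →
    ∃ B : Matrix (Fin n) (Fin n) ℝ, Completes D A B ∧ SignSym B ∧ IsP0plus B

/-- `D` has sign symmetric P-completion. -/
def HasSSPCompletion {n : ℕ} (D : Fin n → Fin n → Prop) : Prop :=
  ∀ A : Matrix (Fin n) (Fin n) ℝ, PartSSP D A →
    ∃ B : Matrix (Fin n) (Fin n) ℝ, Completes D A B ∧ SignSym B ∧ IsP B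

open Filter

variable {n : ℕ}

theorem pMinor_smul_one_add (c : ℝ) (E : Matrix (Fin n) (Fin n) ℝ) (S : Finset (Fin n)) :
    pMinor (c • 1 + E) S =
      (-(E.submatrix ((↑) : S → Fin n) ((↑) : S → Fin n))).charpoly.eval c := by
  rw [Matrix.eval_charpoly, sub_neg_eq_add, pMinor]
  congr 1
  ext i j
  simp only [Matrix.submatrix_apply, Matrix.add_apply, Matrix.smul_apply, Matrix.one_apply,
    Matrix.scalar_apply, Matrix.diagonal_apply, smul_eq_mul, Subtype.ext_iff]
  split_ifs <;> simp

theorem eventually_pMinor_smul_one_add_pos (E : Matrix (Fin n) (Fin n) ℝ) {S : Finset (Fin n)}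
    (hS : S.Nonempty) : ∀ᶠ c : ℝ in atTop, 0 < pMinor (c • 1 + E) S := by
  set p := (-(E.submatrix ((↑) : S → Fin n) ((↑) : S → Fin n))).charpoly
  have hdeg : 0 < p.degree := by
    rw [Matrix.charpoly_degree_eq_dim, Fintype.card_coe]
    exact_mod_cast hS.card_pos
  have hlc : 0 ≤ p.leadingCoeff := by
    rw [(Matrix.charpoly_monic _).leadingCoeff]
    exact zero_le_one
  simpa only [pMinor_smul_one_add] using
    (p.tendsto_atTop_of_leadingCoeff_nonneg hdeg hlc).eventually_gt_atTop 0

theorem eventually_isP_smul_one_add (E : Matrix (Fin n) (Fin n) ℝ) :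
    ∀ᶠ c : ℝ in atTop, IsP (c • 1 + E) := by
  refine eventually_all.2 fun S => ?_
  by_cases hS : S.Nonempty
  · exact (eventually_pMinor_smul_one_add_pos E hS).mono fun _ h _ => h
  · exact .of_forall fun _ h => absurd h hS

theorem IsP.isP0plus {B : Matrix (Fin n) (Fin n) ℝ} (hB : IsP B) : IsP0plus B := by
  intro k hk hkn
  have hpos : ∀ S : Finset (Fin n), S.card = k → 0 < pMinor B S :=
    fun S hS => hB S (Finset.card_pos.1 (hS ▸ hk))
  obtain ⟨S, -, hS⟩ :=
    Finset.exists_subset_card_eq (s := (Finset.univ : Finset (Fin n))) (by simpa using hkn)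
  exact ⟨fun S hS => (hpos S hS).le, S, hS, hpos S hS⟩

theorem SignSym.smul_one_add {B : Matrix (Fin n) (Fin n) ℝ} (hB : SignSym B) (c : ℝ) :
    SignSym (c • 1 + B) := by
  intro i j hij
  simpa [Matrix.one_apply_ne hij, Matrix.one_apply_ne hij.symm] using hB i j hij

open Classical in
noncomputable def twinFill (D : Fin n → Fin n → Prop) (A : Matrix (Fin n) (Fin n) ℝ) :
    Matrix (Fin n) (Fin n) ℝ :=
  fun i j => if D i j then A i j else if D j i then A j i else 0

variable {D : Fin n → Fin n → Prop} {A : Matrix (Fin n) (Fin n) ℝ}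

theorem signSym_twinFill (hA : PartialTwin D A) : SignSym (twinFill D A) := by
  intro i j hij
  have hsq : ∀ x : ℝ, 0 < x * x ∨ (x = 0 ∧ x = 0) := fun x => by
    rcases eq_or_ne x 0 with h | h
    · exact .inr ⟨h, h⟩
    · exact .inl (mul_self_pos.2 h)
  by_cases hij' : D i j <;> by_cases hji : D j i <;>
    simp only [twinFill, hij', hji, if_true, if_false]
  · exact hA i j hij hij' hji
  · exact hsq _
  · exact hsq _
  · simp

theorem completes_smul_one_add_twinFill (hloop : ∀ i, ¬ D i i) (c : ℝ) :
    Completes D A (c • 1 + twinFill D A) := by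
  intro i j hD
  have hij : i ≠ j := by
    rintro rfl
    exact hloop i hD
  simp [twinFill, hD, Matrix.one_apply_ne hij]

theorem no_loop_hasSSP01plusCompletion_general {n : ℕ}
    (D : Fin n → Fin n → Prop) (hloop : ∀ i : Fin n, ¬ D i i) :
    HasSSP01plusCompletion D := by
  rintro A ⟨-, hTwin, -⟩
  obtain ⟨c, hc, hP⟩ :=
    ((eventually_gt_atTop 0).and (eventually_isP_smul_one_add (twinFill D A))).exists
  refine ⟨c • 1 + twinFill D A, completes_smul_one_add_twinFill hloop c,
    (signSym_twinFill hTwin).smul_one_add c, hP.isP0plus, fun i => ?_⟩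
  simpa [twinFill, hloop i] using hc

/-- A digraph with no loop has sign symmetric P₀₁⁺-completion. -/
theorem no_loop_hasSSP01plusCompletion {n : ℕ} (hn : 1 ≤ n)
    (D : Fin n → Fin n → Prop) (hloop : ∀ i : Fin n, ¬ D i i) :
    HasSSP01plusCompletion D :=
  no_loop_hasSSP01plusCompletion_general D hloop

end SSP
end

section
/- Every digraph D on Fin n that has sign symmetric P_0^+-completion also has sign symmetric P_{0,1}-completion. -/
namespace SSP

/-
Complete the partial matrix as a sign symmetric P₀⁺-matrix `B`, then add `1` to each diagonal
entry that was left unspecified. Off-diagonal entries and specified entries are untouched, so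
this is still a sign symmetric completion. Since `det` is multilinear in the rows, a principal
minor of `B + diagonal d` is a sum of principal minors of `B` weighted by products of the
`d i ≥ 0`; hence the result is still P₀, and its diagonal is now positive: specified diagonal
entries are positive by assumption, unspecified ones are `B i i + 1 ≥ 1`.
-/

section DetAddDiagonal

open Matrix

universe u

variable {m : Type u} [Fintype m] [DecidableEq m] {R : Type*} [CommRing R]

theorem det_of_piecewise_single (M : Matrix m m R) (s : Finset m) :
    (of (s.piecewise (fun i => Pi.single i (1 : R)) (fun i => M i))).det
      = (M.submatrix ((↑) : {x // x ∉ s} → m) (↑)).det := by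
  let e : {x // x ∈ s} ⊕ {x // x ∉ s} ≃ m := Equiv.sumCompl (· ∈ s)
  rw [← det_submatrix_equiv_self e]
  have hblocks : (of (s.piecewise (fun i => Pi.single i (1 : R)) (fun i => M i))).submatrix e e
      = fromBlocks 1 0 (of fun (i : {x // x ∉ s}) (j : {x // x ∈ s}) => M i j)
          (M.submatrix ((↑) : {x // x ∉ s} → m) (↑)) := by
    ext (i | i) (j | j)
    · simp only [e, submatrix_apply, of_apply, Equiv.sumCompl_apply_inl, fromBlocks_apply₁₁,
        Finset.piecewise_eq_of_mem _ _ _ i.2, Pi.single_apply, one_apply, Subtype.ext_iff,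
        eq_comm]
    · have hji : (j : m) ≠ i := fun hc => j.2 (hc ▸ i.2)
      simp [e, hji]
    · simp [e, Finset.piecewise_eq_of_notMem _ _ _ i.2]
    · simp [e, Finset.piecewise_eq_of_notMem _ _ _ i.2]
  rw [hblocks, det_fromBlocks_zero₁₂, det_one, one_mul]

theorem det_add_diagonal (M : Matrix m m R) (d : m → R) :
    (M + diagonal d).det = ∑ s : Finset m,
      (∏ i ∈ s, d i) * (M.submatrix ((↑) : {x // x ∉ s} → m) (↑)).det := by
  let detRows := (detRowAlternating : (m → R) [⋀^m]→ₗ[R] R).toMultilinearMap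
  have hexpand : (M + diagonal d).det
      = ∑ s : Finset m, detRows (s.piecewise (fun i => diagonal d i) (fun i => M i)) := by
    rw [add_comm M]
    exact detRows.map_add_univ _ _
  rw [hexpand]
  refine Finset.sum_congr rfl fun s _ => ?_
  set P : m → m → R := s.piecewise (fun i => Pi.single i (1 : R)) (fun i => M i)
  have hrows : s.piecewise (fun i => diagonal d i) (fun i => M i)
      = s.piecewise (fun i => d i • P i) P := by
    funext i
    by_cases hi : i ∈ s
    · simp only [P, Finset.piecewise_eq_of_mem _ _ _ hi]
      funext j
      simp [diagonal_apply, Pi.single_apply, eq_comm]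
    · simp only [P, Finset.piecewise_eq_of_notMem _ _ _ hi]
  rw [hrows, detRows.map_piecewise_smul, smul_eq_mul]
  exact congrArg _ (det_of_piecewise_single M s)

theorem det_add_diagonal_nonneg [PartialOrder R] [IsOrderedRing R] {M : Matrix m m R}
    {d : m → R} (hd : 0 ≤ d)
    (hM : ∀ (ι : Type u) [Fintype ι] [DecidableEq ι] (f : ι → m), f.Injective →
      0 ≤ (M.submatrix f f).det) :
    0 ≤ (M + diagonal d).det := by
  rw [det_add_diagonal]
  exact Finset.sum_nonneg fun s _ => mul_nonneg (Finset.prod_nonneg fun i _ => hd i)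
    (hM _ _ Subtype.val_injective)

end DetAddDiagonal

section PrincipalMinors

open Matrix

variable {n : ℕ}

theorem det_submatrix_eq_pMinor (B : Matrix (Fin n) (Fin n) ℝ) {ι : Type} [Fintype ι]
    [DecidableEq ι] {f : ι → Fin n} (hf : f.Injective) :
    (B.submatrix f f).det = pMinor B (Finset.univ.map ⟨f, hf⟩) := by
  let e : ι ≃ {x // x ∈ Finset.univ.map ⟨f, hf⟩} :=
    (Equiv.ofInjective f hf).trans (Equiv.subtypeEquivRight (by simp))
  rw [pMinor, ← det_submatrix_equiv_self e]
  rfl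

theorem pMinor_singleton (B : Matrix (Fin n) (Fin n) ℝ) (i : Fin n) : pMinor B {i} = B i i :=
  det_unique _

theorem pMinor_add_diagonal (B : Matrix (Fin n) (Fin n) ℝ) (d : Fin n → ℝ) (S : Finset (Fin n)) :
    pMinor (B + diagonal d) S
      = (B.submatrix (Subtype.val : {x // x ∈ S} → Fin n) Subtype.val +
        diagonal fun i : {x // x ∈ S} => d i).det := by
  rw [pMinor]
  congr 1
  ext i j
  rcases eq_or_ne i j with rfl | hij
  · simp
  · simp [diagonal_apply_ne _ hij, diagonal_apply_ne _ (Subtype.val_injective.ne hij)]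

theorem IsP0plus.isP0 {B : Matrix (Fin n) (Fin n) ℝ} (hB : IsP0plus B) : IsP0 B :=
  fun S hS => (hB S.card hS.card_pos (card_finset_fin_le S)).1 S rfl

namespace IsP0

variable {B : Matrix (Fin n) (Fin n) ℝ}

theorem det_submatrix_nonneg (hB : IsP0 B) {ι : Type} [Fintype ι] [DecidableEq ι]
    {f : ι → Fin n} (hf : f.Injective) : 0 ≤ (B.submatrix f f).det := by
  cases isEmpty_or_nonempty ι
  · simp
  · rw [det_submatrix_eq_pMinor B hf]
    exact hB _ Finset.univ_nonempty.map

theorem diag_nonneg (hB : IsP0 B) (i : Fin n) : 0 ≤ B i i :=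
  pMinor_singleton B i ▸ hB {i} (Finset.singleton_nonempty i)

theorem add_diagonal (hB : IsP0 B) {d : Fin n → ℝ} (hd : 0 ≤ d) : IsP0 (B + diagonal d) := by
  intro S _
  rw [pMinor_add_diagonal]
  exact det_add_diagonal_nonneg (fun i => hd i) fun ι _ _ f hf =>
    hB.det_submatrix_nonneg (Subtype.val_injective.comp hf)

end IsP0

theorem SignSym.add_diagonal {B : Matrix (Fin n) (Fin n) ℝ} (hB : SignSym B) (d : Fin n → ℝ) :
    SignSym (B + diagonal d) := by
  intro i j hij
  simpa [diagonal_apply_ne _ hij, diagonal_apply_ne _ hij.symm] using hB i j hij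

theorem Completes.add_diagonal {D : Fin n → Fin n → Prop} {A B : Matrix (Fin n) (Fin n) ℝ}
    (hB : Completes D A B) {d : Fin n → ℝ} (hd : ∀ i, D i i → d i = 0) :
    Completes D A (B + diagonal d) := by
  intro i j hij
  rcases eq_or_ne i j with rfl | hne
  · simp [hd i hij, hB i i hij]
  · simp [diagonal_apply_ne _ hne, hB i j hij]

end PrincipalMinors

/-- Any digraph that has sign symmetric P₀⁺-completion also has sign symmetric
P₀₁-completion. -/
theorem hasSSP0plusCompletion_imp_hasSSP01Completion {n : ℕ}
    (D : Fin n → Fin n → Prop) (h : HasSSP0plusCompletion D) :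
    HasSSP01Completion D := by
  classical
  rintro A ⟨hApos, hAtwin, hAminors⟩
  obtain ⟨B, hBA, hBsign, hBplus⟩ := h A ⟨hAtwin, hAminors⟩
  have hB : IsP0 B := hBplus.isP0
  let d : Fin n → ℝ := fun i => if D i i then 0 else 1
  have hd : 0 ≤ d := fun i => by by_cases hi : D i i <;> simp [d, hi]
  refine ⟨B + Matrix.diagonal d, hBA.add_diagonal fun i hi => if_pos hi, hBsign.add_diagonal d,
    hB.add_diagonal hd, fun i => ?_⟩
  by_cases hi : D i i
  · simpa [d, hi, hBA i i hi] using hApos i hi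
  · simpa [d, hi] using add_pos_of_nonneg_of_pos (hB.diag_nonneg i) one_pos

end SSP
end

section
/- For every n ≥ 1 and every matrix M : Matrix (Fin n) (Fin n) ℝ, there exists t₀ : ℝ such that for all t ≥ t₀, the matrix B defined by B i i = t for all i and B i j = M i j for i ≠ j has every principal minor positive (every nonempty S ⊆ Fin n gives a positive determinant for the S×S principal submatrix of B). -/
/-!
Write the matrix with diagonal `t` as `t • 1 - A`, where `A` is zero on the diagonal. Its
principal minor on `S` is `det (t • 1 - A_S) = χ_{A_S}(t)`, the value at `t` of the monic
characteristic polynomial of degree `|S|` of the principal submatrix `A_S`; for `S` nonempty it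
tends to `+∞` with `t`, and there are only finitely many `S`.
-/

namespace SSP

open Filter Polynomial

theorem _root_.Matrix.eventually_det_scalar_sub_pos {𝕜 ι : Type*} [NormedField 𝕜]
    [LinearOrder 𝕜] [IsStrictOrderedRing 𝕜] [OrderTopology 𝕜] [Fintype ι] [DecidableEq ι]
    [Nonempty ι] (A : Matrix ι ι 𝕜) :
    ∀ᶠ t in atTop, 0 < (Matrix.scalar ι t - A).det := by
  have hdeg : 0 < A.charpoly.degree := by
    rw [A.charpoly_degree_eq_dim]
    exact_mod_cast Fintype.card_pos
  have hlead : 0 ≤ A.charpoly.leadingCoeff := A.charpoly_monic.leadingCoeff ▸ zero_le_one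
  filter_upwards [(tendsto_atTop_of_leadingCoeff_nonneg _ hdeg hlead).eventually_gt_atTop 0]
    with t ht
  rwa [← Matrix.eval_charpoly]

theorem pMinor_scalar_sub {n : ℕ} (A : Matrix (Fin n) (Fin n) ℝ) (t : ℝ) (S : Finset (Fin n)) :
    pMinor (Matrix.scalar (Fin n) t - A) S =
      (Matrix.scalar S t - A.submatrix (Subtype.val : S → Fin n) Subtype.val).det := by
  have hdiag : (Matrix.scalar (Fin n) t).submatrix (Subtype.val : S → Fin n) Subtype.val =
      Matrix.scalar S t :=
    Matrix.submatrix_diagonal _ _ Subtype.val_injective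
  rw [pMinor, ← hdiag]
  rfl

theorem eventually_pMinor_scalar_sub_pos {n : ℕ} (A : Matrix (Fin n) (Fin n) ℝ) :
    ∀ᶠ t in atTop, ∀ S : Finset (Fin n), S.Nonempty →
      0 < pMinor (Matrix.scalar (Fin n) t - A) S := by
  refine eventually_all.2 fun S => eventually_imp_distrib_left.2 fun hS => ?_
  have : Nonempty S := hS.to_subtype
  simpa only [pMinor_scalar_sub] using
    (A.submatrix (Subtype.val : S → Fin n) Subtype.val).eventually_det_scalar_sub_pos

theorem ite_eq_scalar_sub {n : ℕ} (M : Matrix (Fin n) (Fin n) ℝ) (t : ℝ) :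
    (fun i j => if i = j then t else M i j) =
      Matrix.scalar (Fin n) t - (Matrix.diagonal M.diag - M) := by
  ext i j
  obtain rfl | hij := eq_or_ne i j <;> simp [*]

theorem large_diagonal_principal_minors_pos_general {n : ℕ}
    (M : Matrix (Fin n) (Fin n) ℝ) :
    ∃ t₀ : ℝ, ∀ t : ℝ, t₀ ≤ t →
      ∀ S : Finset (Fin n), S.Nonempty →
        0 < pMinor (fun i j => if i = j then t else M i j) S := by
  obtain ⟨t₀, ht₀⟩ :=
    eventually_atTop.1 (eventually_pMinor_scalar_sub_pos (Matrix.diagonal M.diag - M))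
  exact ⟨t₀, fun t ht => by simpa only [ite_eq_scalar_sub] using ht₀ t ht⟩

/-- Setting all diagonal entries to a sufficiently large `t` makes every
principal minor positive. -/
theorem large_diagonal_principal_minors_pos {n : ℕ} (hn : 1 ≤ n)
    (M : Matrix (Fin n) (Fin n) ℝ) :
    ∃ t₀ : ℝ, ∀ t : ℝ, t₀ ≤ t →
      ∀ S : Finset (Fin n), S.Nonempty →
        0 < pMinor (fun i j => if i = j then t else M i j) S :=
  large_diagonal_principal_minors_pos_general M

end SSP
end

section
/- Let B : Matrix (Fin n) (Fin n) ℝ be a sign symmetric P_0-matrix and let i ≠ j be indices with B i i = 0 and B j j = 0. Then B i j = 0 and B j i = 0. -/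
namespace SSP

theorem pMinor_pair_of_lt {n : ℕ} (B : Matrix (Fin n) (Fin n) ℝ) {i j : Fin n} (hij : i < j) :
    pMinor B {i, j} = B i i * B j j - B i j * B j i := by
  rw [pMinor, ← Matrix.det_submatrix_equiv_self (Fin.orderIsoPair i j hij).toEquiv,
    Matrix.det_fin_two]
  simp

theorem pMinor_pair {n : ℕ} (B : Matrix (Fin n) (Fin n) ℝ) {i j : Fin n} (hij : i ≠ j) :
    pMinor B {i, j} = B i i * B j j - B i j * B j i := by
  rcases hij.lt_or_gt with h | h
  · exact pMinor_pair_of_lt B h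
  · rw [Finset.pair_comm, pMinor_pair_of_lt B h]
    ring

/-- In a sign symmetric P₀-matrix, twin entries over two zero diagonal
entries must vanish. -/
theorem zero_diag_forces_zero_twins {n : ℕ} (B : Matrix (Fin n) (Fin n) ℝ)
    (hss : SignSym B) (hP0 : IsP0 B) (i j : Fin n) (hij : i ≠ j)
    (hii : B i i = 0) (hjj : B j j = 0) :
    B i j = 0 ∧ B j i = 0 := by
  have hprod : B i j * B j i ≤ 0 := by
    have hminor := hP0 {i, j} (Finset.insert_nonempty i {j})
    rw [pMinor_pair B hij, hii, hjj] at hminor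
    linarith
  exact (hss i j hij).resolve_left hprod.not_gt

end SSP
end
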